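/- arXiv:2110.15570 — 7 statements merged into one kernel-verified Lean document; each statement's English description precedes it below -/
import Mathlib

section
/- Let V be a finite-dimensional vector space over a field F, let A ∈ End(V), and let V = K ⊕ I be the Fitting decomposition of V with respect to A (i.e., A(K) ⊆ K, A(I) ⊆ I, A restricted to K is nilpotent, and A restricted to I is invertible). Let ζ ∈ F be nonzero. Then a linear map B ∈ End(V) satisfies A∘B = ζ·(B∘A) if and only if B(K) ⊆ K, B(I) ⊆ I, and the restrictions satisfy (A|_K)∘(B|_K) = ζ·(B|_K)∘(A|_K) and (A|_I)∘(B|_I) = ζ·(B|_I)∘(A|_I). -/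
/-!
If `(A|_K)^n = 0`, then `ker (A^n) = K` and `range (A^n) = I`, so the Fitting summands are
intrinsic to `A`. Iterating `A B = ζ B A` gives `A^n B = ζ^n B A^n`, hence `B` preserves
`ker (A^n)` and, as `ζ^n` is a unit, `range (A^n)`. Conversely, the relation holding on
`K` and on `I` means that both lie in the kernel of `A B - ζ B A`, hence so does `K ⊔ I = V`.
-/

open LinearMap

section TwistedCommute

variable {R M : Type*} [CommRing R] [AddCommGroup M] [Module R M]
  {A B : Module.End R M} {ζ : R}

theorem pow_comp_eq_smul_comp_pow (h : A ∘ₗ B = ζ • (B ∘ₗ A)) (n : ℕ) :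
    (A ^ n) ∘ₗ B = ζ ^ n • (B ∘ₗ A ^ n) := by
  induction n with
  | zero => simp [Module.End.one_eq_id]
  | succ n ih =>
    calc (A ^ (n + 1)) ∘ₗ B = (A ^ n) ∘ₗ (A ∘ₗ B) := by rw [pow_succ]; rfl
      _ = ζ • (((A ^ n) ∘ₗ B) ∘ₗ A) := by rw [h, comp_smul]; rfl
      _ = ζ ^ (n + 1) • (B ∘ₗ A ^ (n + 1)) := by
        rw [ih, smul_comp, smul_smul, pow_succ' ζ, pow_succ A]; rfl

theorem mem_ker_pow_of_comp_eq_smul (h : A ∘ₗ B = ζ • (B ∘ₗ A)) (n : ℕ) {x : M}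
    (hx : x ∈ ker (A ^ n)) : B x ∈ ker (A ^ n) := by
  rw [mem_ker] at hx ⊢
  simpa [hx] using LinearMap.congr_fun (pow_comp_eq_smul_comp_pow h n) x

theorem mem_range_pow_of_comp_eq_smul (h : A ∘ₗ B = ζ • (B ∘ₗ A)) (hζ : IsUnit ζ) (n : ℕ)
    {x : M} (hx : x ∈ range (A ^ n)) : B x ∈ range (A ^ n) := by
  obtain ⟨y, rfl⟩ := hx
  rw [← Submodule.smul_mem_iff_of_isUnit _ (hζ.pow n)]
  exact ⟨B y, LinearMap.congr_fun (pow_comp_eq_smul_comp_pow h n) y⟩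

theorem restrict_comp_eq_smul_iff_le_ker {p : Submodule R M} (hAp : ∀ x ∈ p, A x ∈ p)
    (hBp : ∀ x ∈ p, B x ∈ p) :
    A.restrict hAp ∘ₗ B.restrict hBp = ζ • (B.restrict hBp ∘ₗ A.restrict hAp) ↔
      p ≤ ker (A ∘ₗ B - ζ • (B ∘ₗ A)) := by
  simp [LinearMap.ext_iff, Subtype.ext_iff, SetLike.le_def, restrict_apply, sub_eq_zero]

end TwistedCommute

section Fitting

variable {R M : Type*} [CommRing R] [AddCommGroup M] [Module R M] {K I : Submodule R M}

theorem ker_eq_of_isCompl_of_injective_restrict {f : Module.End R M} (hKI : IsCompl K I)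
    (hK : K ≤ ker f) (hI : ∀ x ∈ I, f x ∈ I) (hinj : Function.Injective (f.restrict hI)) :
    ker f = K :=
  ((le_iff_eq_of_codisjoint_of_disjoint hKI.codisjoint
    ((injective_restrict_iff hI).1 hinj)).1 hK).symm

theorem range_eq_of_isCompl_of_surjective_restrict {f : Module.End R M} (hKI : IsCompl K I)
    (hK : K ≤ ker f) (hI : ∀ x ∈ I, f x ∈ I) (hsurj : Function.Surjective (f.restrict hI)) :
    range f = I := by
  have hmapI : I.map f = I := by
    refine le_antisymm (Submodule.map_le_iff_le_comap.2 hI) fun x hx => ?_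
    obtain ⟨y, hy⟩ := hsurj ⟨x, hx⟩
    exact ⟨y, y.2, congrArg Subtype.val hy⟩
  rw [← Submodule.map_top, ← hKI.sup_eq_top, Submodule.map_sup, hmapI,
    le_ker_iff_map.1 hK, bot_sup_eq]

theorem exists_ker_pow_eq_and_range_pow_eq_of_isCompl {A : Module.End R M} (hKI : IsCompl K I)
    (hAK : ∀ x ∈ K, A x ∈ K) (hAI : ∀ x ∈ I, A x ∈ I) (hnil : IsNilpotent (A.restrict hAK))
    (hinv : Function.Bijective (A.restrict hAI)) :
    ∃ n : ℕ, ker (A ^ n) = K ∧ range (A ^ n) = I := by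
  obtain ⟨n, hn⟩ := hnil
  have hK : K ≤ ker (A ^ n) := fun x hx => by
    have := LinearMap.congr_fun hn ⟨x, hx⟩
    rw [Module.End.pow_restrict] at this
    simpa using congrArg Subtype.val this
  have hI := Module.End.pow_apply_mem_of_forall_mem n hAI
  have hbij : Function.Bijective ((A ^ n).restrict hI) := by
    rw [← Module.End.pow_restrict, Module.End.coe_pow]
    exact hinv.iterate n
  exact ⟨n, ker_eq_of_isCompl_of_injective_restrict hKI hK hI hbij.1,
    range_eq_of_isCompl_of_surjective_restrict hKI hK hI hbij.2⟩

end Fitting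

theorem fitting_zeta_commute_general {F V : Type*} [Field F] [AddCommGroup V] [Module F V]
    (A B : Module.End F V) (ζ : F) (hζ : ζ ≠ 0)
    (K I : Submodule F V) (hcompl : IsCompl K I)
    (hAK : ∀ x ∈ K, A x ∈ K) (hAI : ∀ x ∈ I, A x ∈ I)
    (hnil : IsNilpotent (A.restrict hAK))
    (hinv : Function.Bijective (A.restrict hAI)) :
    A ∘ₗ B = ζ • (B ∘ₗ A) ↔
      ∃ (hBK : ∀ x ∈ K, B x ∈ K) (hBI : ∀ x ∈ I, B x ∈ I),
        A.restrict hAK ∘ₗ B.restrict hBK = ζ • (B.restrict hBK ∘ₗ A.restrict hAK) ∧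
        A.restrict hAI ∘ₗ B.restrict hBI = ζ • (B.restrict hBI ∘ₗ A.restrict hAI) := by
  obtain ⟨n, hker, hrange⟩ :=
    exists_ker_pow_eq_and_range_pow_eq_of_isCompl hcompl hAK hAI hnil hinv
  constructor
  · intro h
    have hBK : ∀ x ∈ K, B x ∈ K := hker ▸ fun x => mem_ker_pow_of_comp_eq_smul h n
    have hBI : ∀ x ∈ I, B x ∈ I := hrange ▸ fun x => mem_range_pow_of_comp_eq_smul h hζ.isUnit n
    refine ⟨hBK, hBI, ?_, ?_⟩ <;>
      rw [restrict_comp_eq_smul_iff_le_ker, sub_eq_zero.2 h, ker_zero] <;> exact le_top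
  · rintro ⟨hBK, hBI, hK, hI⟩
    rw [← sub_eq_zero, ← ker_eq_top, eq_top_iff, ← hcompl.sup_eq_top]
    exact sup_le ((restrict_comp_eq_smul_iff_le_ker hAK hBK).1 hK)
      ((restrict_comp_eq_smul_iff_le_ker hAI hBI).1 hI)

/-- Fitting decomposition lemma: with `V = K ⊕ I` the Fitting decomposition for `A`
(`A|_K` nilpotent, `A|_I` invertible) and `ζ ≠ 0`, a linear map `B` satisfies
`A ∘ B = ζ • (B ∘ A)` iff `B` preserves `K` and `I` and the restrictions satisfy the
corresponding twisted commutation relations. -/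
theorem fitting_zeta_commute {F V : Type*} [Field F] [AddCommGroup V] [Module F V]
    [FiniteDimensional F V] (A B : Module.End F V) (ζ : F) (hζ : ζ ≠ 0)
    (K I : Submodule F V) (hcompl : IsCompl K I)
    (hAK : ∀ x ∈ K, A x ∈ K) (hAI : ∀ x ∈ I, A x ∈ I)
    (hnil : IsNilpotent (A.restrict hAK))
    (hinv : Function.Bijective (A.restrict hAI)) :
    A ∘ₗ B = ζ • (B ∘ₗ A) ↔
      ∃ (hBK : ∀ x ∈ K, B x ∈ K) (hBI : ∀ x ∈ I, B x ∈ I),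
        A.restrict hAK ∘ₗ B.restrict hBK = ζ • (B.restrict hBK ∘ₗ A.restrict hAK) ∧
        A.restrict hAI ∘ₗ B.restrict hBI = ζ • (B.restrict hBI ∘ₗ A.restrict hAI) :=
  fitting_zeta_commute_general A B ζ hζ K I hcompl hAK hAI hnil hinv
end

section
/- Let F be a field, ζ ∈ F nonzero, and g a monic polynomial of degree d over F. The F[t]-module obtained from F[t]/(g(t)) by letting t act as multiplication by ζ·t is isomorphic to F[t]/(h(t)) where h(t) = ζ^d·g(ζ^{-1}t). -/
/-!
The substitution `σ : p(t) ↦ p(ζ⁻¹ t)` is an automorphism of the `F`-algebra `F[t]`. It maps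
`(g)` onto `(g(ζ⁻¹ t)) = (h)`, since `ζ^d` is a unit, and it maps `ζ t` to `t`. Hence the induced
isomorphism `F[t]/(g) ≃ F[t]/(h)` turns multiplication by `ζ t` into multiplication by `t`.
-/

open Polynomial

noncomputable section

namespace Polynomial

variable {R : Type*} [CommRing R]

def scaleXEquiv (u : Rˣ) : R[X] ≃ₐ[R] R[X] :=
  algEquivOfCompEqX (C (u : R) * X) (C (↑u⁻¹ : R) * X)
    (by simp [mul_comp, ← mul_assoc, ← C_mul]) (by simp [mul_comp, ← mul_assoc, ← C_mul])

theorem scaleXEquiv_apply (u : Rˣ) (p : R[X]) : scaleXEquiv u p = p.comp (C (u : R) * X) :=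
  (comp_eq_aeval).symm

theorem scaleXEquiv_symm_X (u : Rˣ) : (scaleXEquiv u).symm X = C (↑u⁻¹ : R) * X := by
  simp [scaleXEquiv]

theorem map_span_singleton_scaleXEquiv (u : Rˣ) (g : R[X]) :
    (Ideal.span {g}).map (scaleXEquiv u) = Ideal.span {g.comp (C (u : R) * X)} := by
  rw [Ideal.map_span, Set.image_singleton, scaleXEquiv_apply]

def aevalLmulQuotientEquiv (σ : R[X] ≃ₐ[R] R[X]) (I : Ideal R[X]) :
    Module.AEval' (Algebra.lmul R (R[X] ⧸ I) (Ideal.Quotient.mk I (σ.symm X)))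
      ≃ₗ[R[X]] R[X] ⧸ I.map σ :=
  LinearEquiv.ofAEval _ (Ideal.quotientEquivAlg I (I.map σ) σ rfl).toLinearEquiv fun m => by
    obtain ⟨p, rfl⟩ := Ideal.Quotient.mk_surjective m
    change Ideal.Quotient.mk _ (σ (σ.symm X * p)) = Ideal.Quotient.mk _ (X * σ p)
    rw [map_mul, AlgEquiv.apply_symm_apply]

end Polynomial

end

theorem twisted_quotient_module_iso_general {F : Type*} [Field F] (ζ : F) (hζ : ζ ≠ 0)
    (g : F[X]) (d : ℕ) :
    Nonempty (Module.AEval'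
        (ζ • (Algebra.lmul F (F[X] ⧸ Ideal.span {g})
          (Ideal.Quotient.mk (Ideal.span {g}) X)) : Module.End F (F[X] ⧸ Ideal.span {g}))
      ≃ₗ[F[X]] F[X] ⧸ Ideal.span {ζ ^ d • g.comp (C ζ⁻¹ * X)}) := by
  set σ := scaleXEquiv (Units.mk0 ζ hζ)⁻¹
  have hφ : ζ • Algebra.lmul F (F[X] ⧸ Ideal.span {g}) (Ideal.Quotient.mk _ X)
      = Algebra.lmul F _ (Ideal.Quotient.mk (Ideal.span {g}) (σ.symm X)) := by
    rw [scaleXEquiv_symm_X, inv_inv, Units.val_mk0, ← map_smul, ← smul_eq_C_mul]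
    exact congrArg _ (map_smul (Ideal.Quotient.mkₐ F _) ζ X)
  have hI : Ideal.span {ζ ^ d • g.comp (C ζ⁻¹ * X)} = (Ideal.span {g}).map σ := by
    rw [map_span_singleton_scaleXEquiv, smul_eq_C_mul,
      Ideal.span_singleton_mul_left_unit (isUnit_C.mpr (pow_ne_zero d hζ).isUnit)]
    rfl
  rw [hφ, hI]
  exact ⟨aevalLmulQuotientEquiv σ _⟩

/-- The `F[t]`-module obtained from `F[t]/(g)` by letting `t` act as multiplication by
`ζ·t` is isomorphic to `F[t]/(h)` where `h(t) = ζ^d · g(ζ⁻¹ t)`. -/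
theorem twisted_quotient_module_iso {F : Type*} [Field F] (ζ : F) (hζ : ζ ≠ 0)
    (g : F[X]) (hg : g.Monic) (d : ℕ) (hd : g.natDegree = d) :
    Nonempty (Module.AEval'
        (ζ • (Algebra.lmul F (F[X] ⧸ Ideal.span {g})
          (Ideal.Quotient.mk (Ideal.span {g}) X)) : Module.End F (F[X] ⧸ Ideal.span {g}))
      ≃ₗ[F[X]] F[X] ⧸ Ideal.span {ζ ^ d • g.comp (C ζ⁻¹ * X)}) :=
  twisted_quotient_module_iso_general ζ hζ g d
end

section
/- Let q be a prime power and ζ ∈ F_q nonzero. Define U_{ζ,n}(F_q) = {(A,B) ∈ Mat_n(F_q)² : AB = ζBA, A invertible} and let S_{ζ,n}(F_q) be the set of similarity classes of n×n matrices B over F_q such that B is similar to ζB. Then |U_{ζ,n}(F_q)| = |GL_n(F_q)| · |S_{ζ,n}(F_q)|. -/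
/-!
Let `GL_n` act on matrices by conjugation. A pair `(A, B)` is a pair `(g, B)` with
`g • B = ζ • B`; for fixed `B` such `g` form a coset of the stabiliser of `B` when `B` is
similar to `ζ • B`, and nothing otherwise. Since `B ↦ ζ • B` commutes with conjugation, the
matrices similar to their `ζ`-multiple form a union of orbits, and by orbit–stabiliser the
stabilisers summed over one orbit have total size `|GL_n|`.
-/

open MulAction

namespace MulAction

variable (G : Type*) {α : Type*} [Group G] [MulAction G α]

noncomputable def sigmaStabilizerEquivOrbitsProdGroup (β : Type*) [MulAction G β] :
    (Σ b : β, stabilizer G b) ≃ Quotient (orbitRel G β) × G :=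
  (Equiv.subtypeProdEquivSigmaSubtype fun b g => g ∈ stabilizer G b).symm.trans <|
    ((Equiv.prodComm β G).subtypeEquiv fun _ => Iff.rfl).trans <|
      (Equiv.subtypeProdEquivSigmaSubtype fun g b => b ∈ fixedBy β g).trans <|
        sigmaFixedByEquivOrbitsProdGroup G β

variable {G}

def smulEqEquivStabilizer {a b : α} {w : G} (hw : w • a = b) :
    {g : G // g • a = b} ≃ stabilizer G a where
  toFun g := ⟨w⁻¹ * g, by rw [mem_stabilizer_iff, mul_smul, g.2, ← hw, inv_smul_smul]⟩
  invFun s := ⟨w * s, by rw [mul_smul, s.2, hw]⟩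
  left_inv g := by simp
  right_inv s := by simp

end MulAction

namespace MulActionHom

variable {G α : Type*} [Group G] [MulAction G α] (f : α →[G] α)

def mapsIntoOrbit : SubMulAction G α where
  carrier := {a | f a ∈ orbit G a}
  smul_mem' g a := by
    rintro ⟨h, hh⟩
    refine ⟨g * h * g⁻¹, ?_⟩
    simp only [map_smul, ← hh, mul_smul, inv_smul_smul]

def smulEqApplyEquivSigma :
    {p : G × α // p.1 • p.2 = f p.2} ≃ Σ x : f.mapsIntoOrbit, {g : G // g • (x : α) = f x} where
  toFun p := ⟨⟨p.1.2, p.1.1, p.2⟩, p.1.1, p.2⟩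
  invFun s := ⟨(s.2, s.1), s.2.2⟩
  left_inv _ := rfl
  right_inv _ := rfl

noncomputable def orbitsMapsIntoOrbitEquiv :
    Quotient (orbitRel G f.mapsIntoOrbit) ≃
      {O : Set α // ∃ a, f a ∈ orbit G a ∧ O = orbit G a} :=
  Equiv.ofBijective
    (Quotient.lift (fun x => ⟨orbit G (x : α), x, x.2, rfl⟩) fun _ _ hxy =>
      Subtype.ext (orbit_eq_iff.mpr (SubMulAction.mem_orbit_subMul_iff.mp hxy)))
    ⟨fun x y hxy => by
      induction x using Quotient.inductionOn
      induction y using Quotient.inductionOn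
      exact Quotient.sound (SubMulAction.mem_orbit_subMul_iff.mpr
        (orbit_eq_iff.mp (congrArg Subtype.val hxy))),
     fun ⟨_, a, ha, hO⟩ => ⟨Quotient.mk _ ⟨a, ha⟩, Subtype.ext hO.symm⟩⟩

theorem card_smul_eq_apply :
    Nat.card {p : G × α // p.1 • p.2 = f p.2} =
      Nat.card G * Nat.card {O : Set α // ∃ a, f a ∈ orbit G a ∧ O = orbit G a} :=
  calc Nat.card {p : G × α // p.1 • p.2 = f p.2}
      = Nat.card (Σ x : f.mapsIntoOrbit, stabilizer G x) :=
        Nat.card_congr <| f.smulEqApplyEquivSigma.trans <| Equiv.sigmaCongrRight fun x =>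
          (smulEqEquivStabilizer x.2.choose_spec).trans
            (MulEquiv.subgroupCongr (SubMulAction.stabilizer_of_subMul x).symm).toEquiv
    _ = Nat.card (Quotient (orbitRel G f.mapsIntoOrbit) × G) :=
        Nat.card_congr (sigmaStabilizerEquivOrbitsProdGroup G _)
    _ = _ := by rw [Nat.card_prod, mul_comm, Nat.card_congr f.orbitsMapsIntoOrbitEquiv]

end MulActionHom

namespace ConjAct

variable {M : Type*} [Monoid M]

theorem mem_orbit_units_iff {B C : M} :
    C ∈ orbit (ConjAct Mˣ) B ↔ ∃ P : Mˣ, ↑P * B * ↑P⁻¹ = C :=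
  Iff.rfl

theorem orbit_units (B : M) : orbit (ConjAct Mˣ) B = {C | ∃ P : Mˣ, C = ↑P * B * ↑P⁻¹} :=
  Set.ext fun _ => mem_orbit_units_iff.trans (exists_congr fun _ => eq_comm)

theorem toConjAct_smul_eq_smul_iff {R : Type*} [SMul R M] [IsScalarTower R M M]
    (u : Mˣ) (r : R) (B : M) : toConjAct u • B = r • B ↔ ↑u * B = r • (B * ↑u) := by
  rw [units_smul_def, ofConjAct_toConjAct, Units.mul_inv_eq_iff_eq_mul, smul_mul_assoc]

noncomputable def unitSkewCommutingPairsEquiv {R : Type*} [SMul R M] [IsScalarTower R M M]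
    (r : R) :
    {p : M × M // p.1 * p.2 = r • (p.2 * p.1) ∧ IsUnit p.1} ≃
      {p : ConjAct Mˣ × M // p.1 • p.2 = r • p.2} where
  toFun p := ⟨(toConjAct p.2.2.unit, p.1.2),
    (toConjAct_smul_eq_smul_iff _ _ _).mpr (by rw [IsUnit.unit_spec]; exact p.2.1)⟩
  invFun p := ⟨(↑(ofConjAct p.1.1), p.1.2),
    (toConjAct_smul_eq_smul_iff _ _ _).mp p.2, Units.isUnit _⟩
  left_inv _ := rfl
  right_inv _ := Subtype.ext (Prod.ext (Units.ext rfl) rfl)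

end ConjAct

theorem card_U_eq_card_GL_mul_card_classes_general {F : Type*} [Field F] (n : ℕ)
    (ζ : F) :
    Nat.card {p : Matrix (Fin n) (Fin n) F × Matrix (Fin n) (Fin n) F //
        p.1 * p.2 = ζ • (p.2 * p.1) ∧ IsUnit p.1} =
      Nat.card (GL (Fin n) F) *
        Nat.card {O : Set (Matrix (Fin n) (Fin n) F) // ∃ B : Matrix (Fin n) (Fin n) F,
          (∃ P : GL (Fin n) F, (P : Matrix (Fin n) (Fin n) F) * B *
            ((P⁻¹ : GL (Fin n) F) : Matrix (Fin n) (Fin n) F) = ζ • B) ∧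
          O = {C | ∃ P : GL (Fin n) F, C = (P : Matrix (Fin n) (Fin n) F) * B *
            ((P⁻¹ : GL (Fin n) F) : Matrix (Fin n) (Fin n) F)}} := by
  have count := (SMulCommClass.toMulActionHom (ConjAct (GL (Fin n) F))
    (Matrix (Fin n) (Fin n) F) ζ).card_smul_eq_apply
  simp only [SMulCommClass.toMulActionHom_apply, ConjAct.mem_orbit_units_iff] at count
  simp only [ConjAct.orbit_units] at count
  rw [Nat.card_congr (ConjAct.unitSkewCommutingPairsEquiv ζ), count,
    Nat.card_congr ConjAct.ofConjAct.toEquiv]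

/-- `|U_{ζ,n}(F_q)| = |GL_n(F_q)| · |S_{ζ,n}(F_q)|`, where `S_{ζ,n}` is the set of
similarity classes (conjugation orbits) of `n×n` matrices `B` with `B` similar to `ζ·B`. -/
theorem card_U_eq_card_GL_mul_card_classes {F : Type*} [Field F] [Fintype F] (n : ℕ)
    (ζ : F) (hζ : ζ ≠ 0) :
    Nat.card {p : Matrix (Fin n) (Fin n) F × Matrix (Fin n) (Fin n) F //
        p.1 * p.2 = ζ • (p.2 * p.1) ∧ IsUnit p.1} =
      Nat.card (GL (Fin n) F) *
        Nat.card {O : Set (Matrix (Fin n) (Fin n) F) // ∃ B : Matrix (Fin n) (Fin n) F,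
          (∃ P : GL (Fin n) F, (P : Matrix (Fin n) (Fin n) F) * B *
            ((P⁻¹ : GL (Fin n) F) : Matrix (Fin n) (Fin n) F) = ζ • B) ∧
          O = {C | ∃ P : GL (Fin n) F, C = (P : Matrix (Fin n) (Fin n) F) * B *
            ((P⁻¹ : GL (Fin n) F) : Matrix (Fin n) (Fin n) F)}} :=
  card_U_eq_card_GL_mul_card_classes_general n ζ
end

section
/- Let q > 1 be an integer and m a positive integer. Then for each n ≥ 0, the number of tuples (b₁, b₂, b₃, …) of nonnegative integers with Σᵢ i·bᵢ = n, weighted by Πᵢ q^⌊bᵢ/m⌋, equals the coefficient of x^n in the infinite product Π_{i≥1} (1 − x^{im}) / ((1 − x^i)(1 − q·x^{im})) as a formal power series. -/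
/-!
Substituting `X ↦ X ^ k` into `(1 - X ^ m) / ((1 - X) (1 - q X ^ m)) = ∑ q ^ ⌊b / m⌋ X ^ b`
shows that the `k`-th factor of the product is `∑ c, q ^ ⌊c / m⌋ X ^ (k c)`. The product is
therefore the partition generating function `Nat.Partition.genFun` in which a part occurring `c`
times has weight `q ^ ⌊c / m⌋`, and a partition of `n` is the same as a tuple `(bᵢ)` with
`∑ i bᵢ = n`, where `bᵢ` is the multiplicity of the part `i`.
-/

open PowerSeries Finset
open scoped PowerSeries.WithPiTopology

namespace PowerSeries

variable {R : Type*} [CommRing R]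

noncomputable def powDivSeries (q : R) (m : ℕ) : R⟦X⟧ := mk fun b ↦ q ^ (b / m)

theorem powDivSeries_mul_one_sub_C_mul_X_pow (q : R) {m : ℕ} (hm : 0 < m) :
    powDivSeries q m * (1 - C q * X ^ m) = ∑ r ∈ range m, X ^ r := by
  ext b
  simp only [mul_sub, mul_one, mul_left_comm _ (C q), map_sub, coeff_C_mul, coeff_mul_X_pow',
    powDivSeries, coeff_mk, map_sum, coeff_X_pow, sum_ite_eq, mem_range]
  rcases lt_or_ge b m with hb | hb
  · simp [hb, not_le.mpr hb, Nat.div_eq_of_lt hb]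
  · rw [if_pos hb, if_neg hb.not_gt, Nat.div_eq_sub_div hm hb, pow_succ, mul_comm, sub_self]

theorem powDivSeries_mul (q : R) {m : ℕ} (hm : 0 < m) :
    powDivSeries q m * ((1 - X) * (1 - C q * X ^ m)) = 1 - X ^ m := by
  rw [mul_comm (1 - X), ← mul_assoc, powDivSeries_mul_one_sub_C_mul_X_pow q hm, geom_sum_mul_neg]

theorem constantCoeff_powDivSeries (q : R) (m : ℕ) : constantCoeff (powDivSeries q m) = 1 := by
  simp [powDivSeries, ← coeff_zero_eq_constantCoeff_apply]

theorem one_sub_X_pow_mul_inv_eq_expand {K : Type*} [Field K] (q : K) {m : ℕ} (hm : 0 < m)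
    {a : ℕ} (ha : a ≠ 0) :
    (1 - X ^ (a * m)) * ((1 - X ^ a) * (1 - C q * X ^ (a * m)))⁻¹ =
      expand a ha (powDivSeries q m) := by
  have hunit : constantCoeff ((1 - X ^ a : K⟦X⟧) * (1 - C q * X ^ (a * m))) ≠ 0 := by
    simp [ha, (Nat.mul_pos (Nat.pos_of_ne_zero ha) hm).ne']
  rw [eq_comm, PowerSeries.eq_mul_inv_iff_mul_eq hunit]
  simpa [pow_mul, expand_C] using congrArg (expand a ha) (powDivSeries_mul q hm)

variable [TopologicalSpace R] [T2Space R]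

theorem expand_eq_one_add_tsum {φ : R⟦X⟧} (hφ : constantCoeff φ = 1) {a : ℕ} (ha : a ≠ 0) :
    expand a ha φ = 1 + ∑' j, coeff (j + 1) φ • X ^ (a * (j + 1)) := by
  ext d
  rw [map_add, (Nat.Partition.summable_genFun_term' (fun _ c ↦ coeff c φ) ha).map_tsum _
    (WithPiTopology.continuous_coeff _ _), coeff_expand]
  simp only [map_smul, coeff_X_pow, coeff_one, smul_eq_mul, mul_ite, mul_one, mul_zero]
  by_cases hd : a ∣ d
  · obtain ⟨_ | c, rfl⟩ := hd
    · simp [ha, hφ]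
    · rw [if_pos (dvd_mul_right a _), Nat.mul_div_cancel_left _ (Nat.pos_of_ne_zero ha),
        if_neg (by positivity), zero_add, tsum_eq_single c fun j hj ↦ if_neg ?_, if_pos rfl]
      rw [mul_right_inj' ha]
      omega
  · have hd0 : d ≠ 0 := fun h ↦ hd (h ▸ dvd_zero a)
    have hda : ∀ j, d ≠ a * (j + 1) := fun j h ↦ hd (h ▸ dvd_mul_right a _)
    simp [hd, hd0, hda]

end PowerSeries

theorem Finsupp.sum_toMultiset_map_succ (b : ℕ →₀ ℕ) :
    ((toMultiset b).map (· + 1)).sum = ∑ i ∈ b.support, (i + 1) * b i := by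
  rw [toMultiset_map, sum_toMultiset, sum_mapDomain_index_inj (add_left_injective 1)]
  simp only [smul_eq_mul, mul_comm, Finsupp.sum]

namespace Nat.Partition

variable {n : ℕ}

/-- Entry `i` is the multiplicity of the part `i + 1`. -/
noncomputable def multiplicities (p : n.Partition) : ℕ →₀ ℕ :=
  Multiset.toFinsupp (p.parts.map (· - 1))

theorem toMultiset_multiplicities_map_succ (p : n.Partition) :
    (Finsupp.toMultiset p.multiplicities).map (· + 1) = p.parts := by
  rw [multiplicities, Multiset.toFinsupp_toMultiset, Multiset.map_map]
  exact Multiset.map_congr rfl (fun i hi ↦ Nat.sub_add_cancel (p.parts_pos hi)) |>.trans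
    (Multiset.map_id _)

theorem bijOn_multiplicities :
    Set.BijOn (multiplicities (n := n)) Set.univ
      {b : ℕ →₀ ℕ | ∑ i ∈ b.support, (i + 1) * b i = n} := by
  refine ⟨fun p _ ↦ ?_, fun p _ p' _ h ↦ ?_, fun b hb ↦ ?_⟩
  · rw [Set.mem_ofPred_eq, ← Finsupp.sum_toMultiset_map_succ, toMultiset_multiplicities_map_succ,
      p.parts_sum]
  · ext1
    rw [← toMultiset_multiplicities_map_succ p, h, toMultiset_multiplicities_map_succ]
  · refine ⟨⟨(Finsupp.toMultiset b).map (· + 1), by simp, ?_⟩, trivial, ?_⟩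
    · rwa [Finsupp.sum_toMultiset_map_succ]
    · simp [multiplicities, Multiset.map_map]

theorem prod_multiplicities {M : Type*} [CommMonoid M] (f : ℕ → ℕ → M) (p : n.Partition) :
    p.parts.toFinsupp.prod f = p.multiplicities.prod fun i c ↦ f (i + 1) c := by
  rw [← toMultiset_multiplicities_map_succ p, Finsupp.toMultiset_map,
    Finsupp.toMultiset_toFinsupp, Finsupp.prod_mapDomain_index_inj (add_left_injective 1)]

theorem sum_prod_eq_finsum {M : Type*} [CommSemiring M] (f : ℕ → ℕ → M) :
    ∑ p : n.Partition, p.parts.toFinsupp.prod f =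
      ∑ᶠ (b : ℕ →₀ ℕ) (_ : ∑ i ∈ b.support, (i + 1) * b i = n),
        b.prod fun i c ↦ f (i + 1) c := by
  rw [← finsum_eq_sum_of_fintype, ← finsum_mem_univ]
  exact finsum_mem_eq_of_bijOn _ bijOn_multiplicities fun p _ ↦ prod_multiplicities f p

end Nat.Partition

theorem weighted_tuple_count_eq_coeff_general (q : ℤ) (m : ℕ) (hm : 0 < m) (n : ℕ) :
    letI : TopologicalSpace (PowerSeries ℚ) :=
      inferInstanceAs (TopologicalSpace ((Unit →₀ ℕ) → ℚ))
    PowerSeries.coeff (R := ℚ) n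
        (∏' i : ℕ, ((1 - (X : PowerSeries ℚ) ^ ((i + 1) * m)) *
          ((1 - (X : PowerSeries ℚ) ^ (i + 1)) *
            (1 - PowerSeries.C (R := ℚ) (q : ℚ) * (X : PowerSeries ℚ) ^ ((i + 1) * m)))⁻¹)) =
      ∑ᶠ (b : ℕ →₀ ℕ) (_ : ∑ i ∈ b.support, (i + 1) * b i = n),
        ∏ i ∈ b.support, (q : ℚ) ^ (b i / m) := by
  have hfactor (i : ℕ) :
      (1 - X ^ ((i + 1) * m)) * ((1 - X ^ (i + 1)) * (1 - C (q : ℚ) * X ^ ((i + 1) * m)))⁻¹ =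
        1 + ∑' j, (q : ℚ) ^ ((j + 1) / m) • X ^ ((i + 1) * (j + 1)) := by
    rw [one_sub_X_pow_mul_inv_eq_expand _ hm i.succ_ne_zero,
      expand_eq_one_add_tsum (constantCoeff_powDivSeries _ _)]
    simp [powDivSeries]
  simp only [hfactor]
  -- the topology of the statement is definitionally `WithPiTopology`
  erw [← Nat.Partition.genFun_eq_tprod (fun _ c ↦ (q : ℚ) ^ (c / m)),
    Nat.Partition.coeff_genFun, Nat.Partition.sum_prod_eq_finsum]
  rfl

/-- For `q > 1` and `m ≥ 1`, the number of finitely-supported tuples `(b₁, b₂, …)` of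
nonnegative integers with `Σᵢ i·bᵢ = n`, weighted by `Πᵢ q^⌊bᵢ/m⌋`, equals the coefficient
of `x^n` in `Π_{i≥1} (1 − x^{im}) / ((1 − x^i)(1 − q·x^{im}))`.  The infinite product is a
`tprod` with respect to the coefficientwise (product) topology on `ℚ⟦X⟧`. -/
theorem weighted_tuple_count_eq_coeff (q : ℤ) (hq : 1 < q) (m : ℕ) (hm : 0 < m) (n : ℕ) :
    letI : TopologicalSpace (PowerSeries ℚ) :=
      inferInstanceAs (TopologicalSpace ((Unit →₀ ℕ) → ℚ))
    PowerSeries.coeff (R := ℚ) n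
        (∏' i : ℕ, ((1 - (X : PowerSeries ℚ) ^ ((i + 1) * m)) *
          ((1 - (X : PowerSeries ℚ) ^ (i + 1)) *
            (1 - PowerSeries.C (R := ℚ) (q : ℚ) * (X : PowerSeries ℚ) ^ ((i + 1) * m)))⁻¹)) =
      ∑ᶠ (b : ℕ →₀ ℕ) (_ : ∑ i ∈ b.support, (i + 1) * b i = n),
        ∏ i ∈ b.support, (q : ℚ) ^ (b i / m) :=
  weighted_tuple_count_eq_coeff_general q m hm n
end

section
/- Let q be a prime power and ζ ∈ F_q nonzero. Then the number of pairs (A,B) of n×n matrices over F_q with A nilpotent and AB = ζBA equals the number of pairs (A,B) with A nilpotent and AB = BA; i.e., |N_{ζ,n}(F_q)| = |N_{1,n}(F_q)| for all n. -/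
/-!
A nilpotent matrix `A` is conjugate to `ζ • A`. As an `F[X]`-module via `A`, `Fⁿ` is a direct sum
of cyclic modules `F[X] ⧸ I` with `X ^ k ∈ I`, i.e. `I = (X ^ j)`; the substitution `X ↦ ζ X`
preserves each such ideal, so it induces on every summand an `F`-linear automorphism `g` with
`g (X • m) = ζ • X • g m`, and these assemble to `P` with `P A P⁻¹ = ζ A`.
Then `B ↦ P⁻¹ B` maps the matrices commuting with `A` bijectively onto those with `A B = ζ B A`.
-/

open Polynomial
open scoped DirectSum

section

variable {F : Type*} [Field F]

theorem Polynomial.exists_span_X_pow_eq_of_X_pow_mem {I : Ideal F[X]} {k : ℕ} (h : X ^ k ∈ I) :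
    ∃ j, Ideal.span {X ^ j} = I := by
  obtain ⟨g, rfl⟩ := (IsPrincipalIdealRing.principal I).principal
  obtain ⟨j, -, hj⟩ := (dvd_prime_pow prime_X k).mp (Ideal.mem_span_singleton.mp h)
  exact ⟨j, Ideal.span_singleton_eq_span_singleton.mpr hj.symm⟩

theorem Ideal.map_algEquivCMulXAddC_zero_eq_self {ζ : F} [Invertible ζ] {I : Ideal F[X]} {k : ℕ}
    (h : X ^ k ∈ I) : I.map (algEquivCMulXAddC ζ 0 : F[X] →+* F[X]) = I := by
  obtain ⟨j, rfl⟩ := exists_span_X_pow_eq_of_X_pow_mem h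
  have hX : (algEquivCMulXAddC ζ 0 : F[X] →+* F[X]) (X ^ j) = C (ζ ^ j) * X ^ j := by
    simp [mul_pow]
  rw [Ideal.map_span, Set.image_singleton, hX,
    Ideal.span_singleton_mul_left_unit (isUnit_C.mpr ((isUnit_of_invertible ζ).pow j))]

/-- `M` is isomorphic, as an `F[X]`-module, to its twist along the substitution `X ↦ ζ X`. -/
def HasScalingAut (ζ : F) (M : Type*) [AddCommGroup M] [Module F[X] M] [Module F M] : Prop :=
  ∃ g : M ≃ₗ[F] M, ∀ m : M, g ((X : F[X]) • m) = ζ • (X : F[X]) • g m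

variable {ζ : F}

theorem hasScalingAut_quotient (hζ : ζ ≠ 0) {I : Ideal F[X]} {k : ℕ} (h : X ^ k ∈ I) :
    HasScalingAut ζ (F[X] ⧸ I) := by
  let := invertibleOfNonzero hζ
  refine ⟨(Ideal.quotientEquivAlg I I (algEquivCMulXAddC ζ 0)
    (Ideal.map_algEquivCMulXAddC_zero_eq_self h).symm).toLinearEquiv, fun y => ?_⟩
  obtain ⟨r, rfl⟩ := Ideal.Quotient.mk_surjective y
  have hX : ∀ s : F[X], (X : F[X]) • Ideal.Quotient.mk I s = Ideal.Quotient.mk I (X * s) :=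
    fun _ => rfl
  simp only [AlgEquiv.toLinearEquiv_apply, hX, Ideal.quotientEquivAlg_mk]
  change _ = Ideal.Quotient.mk I (ζ • _)
  congr 1
  simp [smul_eq_C_mul, mul_assoc]

theorem HasScalingAut.directSum {ι : Type*} {M : ι → Type*}
    [∀ i, AddCommGroup (M i)] [∀ i, Module F[X] (M i)] [∀ i, Module F (M i)]
    (h : ∀ i, HasScalingAut ζ (M i)) : HasScalingAut ζ (⨁ i, M i) := by
  choose g hg using h
  exact ⟨DFinsupp.mapRange.linearEquiv g, fun x => DFinsupp.ext fun i => hg i (x i)⟩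

theorem HasScalingAut.of_linearEquiv {M N : Type*} [AddCommGroup M] [Module F[X] M] [Module F M]
    [IsScalarTower F F[X] M] [AddCommGroup N] [Module F[X] N] [Module F N] [IsScalarTower F F[X] N]
    (e : M ≃ₗ[F[X]] N) (h : HasScalingAut ζ N) : HasScalingAut ζ M := by
  obtain ⟨g, hg⟩ := h
  refine ⟨e.restrictScalars F ≪≫ₗ g ≪≫ₗ (e.restrictScalars F).symm, fun m => ?_⟩
  simp [hg]

theorem Module.End.isConj_smul_of_isNilpotent {V : Type*} [AddCommGroup V] [Module F V]
    [FiniteDimensional F V] {f : Module.End F V} (hf : IsNilpotent f) (hζ : ζ ≠ 0) :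
    IsConj f (ζ • f) := by
  obtain ⟨k, hk⟩ := hf
  have hXk : X ^ k ∈ Module.annihilator F[X] (Module.AEval' f) :=
    Module.mem_annihilator.mpr fun m => by
      rw [← (Module.AEval'.of f).apply_symm_apply m, Module.AEval'.X_pow_smul_of, hk]
      simp
  have htors : Module.IsTorsion F[X] (Module.AEval' f) :=
    Module.AEval.isTorsion_of_aeval_eq_zero (p := X ^ k) (by simp [hk]) (pow_ne_zero k X_ne_zero)
  obtain ⟨ι, _, p, -, e, ⟨E⟩⟩ := Module.equiv_directSum_of_isTorsion htors
  classical
  have hXk_mem : ∀ i, X ^ k ∈ Ideal.span {p i ^ e i} := by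
    simpa [E.annihilator_eq, DirectSum, Module.annihilator_dfinsupp, Ideal.annihilator_quotient]
      using hXk
  obtain ⟨g, hg⟩ := (HasScalingAut.directSum fun i =>
    hasScalingAut_quotient hζ (hXk_mem i)).of_linearEquiv E
  let g' := Module.AEval'.of f ≪≫ₗ g ≪≫ₗ (Module.AEval'.of f).symm
  refine ⟨⟨g', g'.symm, by ext; simp, by ext; simp⟩, LinearMap.ext fun v => ?_⟩
  simp [g', ← Module.AEval'.X_smul_of, hg]

theorem Matrix.isConj_smul_of_isNilpotent {n : Type*} [Fintype n] [DecidableEq n]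
    {A : Matrix n n F} (hA : IsNilpotent A) (hζ : ζ ≠ 0) : IsConj A (ζ • A) := by
  let e : Matrix n n F ≃ₐ[F] Module.End F (n → F) := Matrix.toLinAlgEquiv'
  simpa using e.symm.toMonoidHom.map_isConj
    (Module.End.isConj_smul_of_isNilpotent (hA.map e) hζ)

variable {R : Type*} [Ring R] [Algebra F R]

theorem SemiconjBy.mul_units_inv_mul_eq_smul_iff {c : Rˣ} {A : R}
    (hc : SemiconjBy (c : R) A (ζ • A)) (hζ : ζ ≠ 0) (B : R) :
    A * (↑c⁻¹ * B) = ζ • (↑c⁻¹ * B * A) ↔ A * B = B * A := by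
  have hA : A * ↑c⁻¹ = ζ • (↑c⁻¹ * A) := by
    rw [← mul_smul_comm, hc.units_inv_symm_left.eq]
  rw [← mul_assoc, hA, smul_mul_assoc, mul_assoc, mul_assoc, smul_right_inj hζ,
    Units.mul_right_inj]

theorem card_nilpotent_smul_commuting_eq_of_isConj (hζ : ζ ≠ 0)
    (hconj : ∀ A : R, IsNilpotent A → IsConj A (ζ • A)) :
    Nat.card {p : R × R // p.1 * p.2 = ζ • (p.2 * p.1) ∧ IsNilpotent p.1} =
      Nat.card {p : R × R // p.1 * p.2 = p.2 * p.1 ∧ IsNilpotent p.1} := by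
  classical
  let c : R → Rˣ := fun A => if hA : IsNilpotent A then (hconj A hA).choose else 1
  have hc : ∀ A, IsNilpotent A → SemiconjBy (c A : R) A (ζ • A) := fun A hA => by
    simpa [c, hA] using (hconj A hA).choose_spec
  let e : R × R ≃ R × R := (Equiv.refl R).prodShear fun A => Units.mulLeft (c A)⁻¹
  refine (Nat.card_congr (e.subtypeEquiv fun p => ?_)).symm
  exact and_congr_left fun hA => ((hc p.1 hA).mul_units_inv_mul_eq_smul_iff hζ p.2).symm

end

theorem card_nilpotent_zeta_commuting_eq_general {F : Type*} [Field F]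
    (ζ : F) (hζ : ζ ≠ 0) (n : ℕ) :
    Nat.card {p : Matrix (Fin n) (Fin n) F × Matrix (Fin n) (Fin n) F //
        p.1 * p.2 = ζ • (p.2 * p.1) ∧ IsNilpotent p.1} =
      Nat.card {p : Matrix (Fin n) (Fin n) F × Matrix (Fin n) (Fin n) F //
        p.1 * p.2 = p.2 * p.1 ∧ IsNilpotent p.1} :=
  card_nilpotent_smul_commuting_eq_of_isConj hζ fun _ hA => Matrix.isConj_smul_of_isNilpotent hA hζ

/-- `|N_{ζ,n}(F_q)| = |N_{1,n}(F_q)|`: the number of pairs `(A, B)` of `n×n` matrices with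
`A` nilpotent and `AB = ζ·BA` equals the number with `A` nilpotent and `AB = BA`. -/
theorem card_nilpotent_zeta_commuting_eq {F : Type*} [Field F] [Fintype F]
    (ζ : F) (hζ : ζ ≠ 0) (n : ℕ) :
    Nat.card {p : Matrix (Fin n) (Fin n) F × Matrix (Fin n) (Fin n) F //
        p.1 * p.2 = ζ • (p.2 * p.1) ∧ IsNilpotent p.1} =
      Nat.card {p : Matrix (Fin n) (Fin n) F × Matrix (Fin n) (Fin n) F //
        p.1 * p.2 = p.2 * p.1 ∧ IsNilpotent p.1} :=
  card_nilpotent_zeta_commuting_eq_general ζ hζ n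
end

section
/- Let F be a field, ζ ∈ F nonzero, and J the single nilpotent Jordan block of size k (with ones on the superdiagonal and zeros elsewhere). Then the dimension of the space of k×k matrices B over F satisfying J·B = ζ·B·J equals k. -/
/-! Comparing entries, `J * B = ζ • (B * J)` says that row `i + 1` of `B` is `ζ` times row `i`
shifted one place to the right, and that the shift of the last row vanishes. Hence a solution is
determined by its first row `c`, namely `B i j = ζ ^ i * c (j - i)` for `i ≤ j` and `0` below the
diagonal, and conversely every such matrix is a solution. So `c ↦ B` is an injective linear map
from `F ^ k` onto the solution space. -/

theorem LinearMap.mem_ker_mulLeft_sub_smul_mulRight_iff {R A : Type*} [CommSemiring R] [Ring A]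
    [Algebra R A] (a : A) (ζ : R) (b : A) :
    b ∈ ker (mulLeft R a - ζ • mulRight R a) ↔ a * b = ζ • (b * a) := by
  rw [mem_ker, sub_apply, smul_apply, mulLeft_apply, mulRight_apply, sub_eq_zero]

namespace Matrix

variable {R : Type*} {k : ℕ}

def nilpotentJordanBlock (R : Type*) [Zero R] [One R] (k : ℕ) : Matrix (Fin k) (Fin k) R :=
  of fun i j => if (j : ℕ) = i + 1 then 1 else 0

section Semiring

variable [NonAssocSemiring R]

theorem nilpotentJordanBlock_mul_apply (B : Matrix (Fin k) (Fin k) R) (i j : Fin k) :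
    (nilpotentJordanBlock R k * B) i j = if h : (i : ℕ) + 1 < k then B ⟨i + 1, h⟩ j else 0 := by
  rw [mul_apply]
  split_ifs with h
  · rw [Finset.sum_eq_single ⟨i + 1, h⟩] <;> simp +contextual [nilpotentJordanBlock, Fin.ext_iff]
  · exact Finset.sum_eq_zero fun l _ => by simp [nilpotentJordanBlock]; omega

theorem mul_nilpotentJordanBlock_apply (B : Matrix (Fin k) (Fin k) R) (i j : Fin k) :
    (B * nilpotentJordanBlock R k) i j = if h : 0 < (j : ℕ) then B i ⟨j - 1, by omega⟩ else 0 := by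
  rw [mul_apply]
  split_ifs with h
  · rw [Finset.sum_eq_single ⟨j - 1, by omega⟩] <;>
      simp [nilpotentJordanBlock, Fin.ext_iff] <;> omega
  · exact Finset.sum_eq_zero fun l _ => by simp [nilpotentJordanBlock]; omega

end Semiring

section CommSemiring

variable [CommSemiring R]

def scaledUpperToeplitz (ζ : R) (c : Fin k → R) : Matrix (Fin k) (Fin k) R :=
  of fun i j => if (i : ℕ) ≤ j then ζ ^ (i : ℕ) * c ⟨j - i, by omega⟩ else 0

theorem scaledUpperToeplitz_apply (ζ : R) (c : Fin k → R) (i j : Fin k) :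
    scaledUpperToeplitz ζ c i j = if (i : ℕ) ≤ j then ζ ^ (i : ℕ) * c ⟨j - i, by omega⟩ else 0 :=
  rfl

def scaledUpperToeplitzₗ (ζ : R) : (Fin k → R) →ₗ[R] Matrix (Fin k) (Fin k) R where
  toFun := scaledUpperToeplitz ζ
  map_add' c d := by
    ext i j
    simp only [scaledUpperToeplitz_apply, add_apply, Pi.add_apply]
    split_ifs <;> ring
  map_smul' a c := by
    ext i j
    simp only [scaledUpperToeplitz_apply, smul_apply, Pi.smul_apply, smul_eq_mul,
      RingHom.id_apply]
    split_ifs <;> ring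

theorem scaledUpperToeplitzₗ_injective (ζ : R) :
    Function.Injective (scaledUpperToeplitzₗ (k := k) ζ) := fun c d h => funext fun j => by
  have h₀ : scaledUpperToeplitz ζ c ⟨0, j.pos⟩ j = scaledUpperToeplitz ζ d ⟨0, j.pos⟩ j :=
    congrFun₂ h _ _
  simpa only [scaledUpperToeplitz_apply, Nat.zero_le, if_true, pow_zero, one_mul, Nat.sub_zero]
    using h₀

theorem nilpotentJordanBlock_mul_scaledUpperToeplitz (ζ : R) (c : Fin k → R) :
    nilpotentJordanBlock R k * scaledUpperToeplitz ζ c =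
      ζ • (scaledUpperToeplitz ζ c * nilpotentJordanBlock R k) := by
  ext i j
  rw [smul_apply, nilpotentJordanBlock_mul_apply, mul_nilpotentJordanBlock_apply]
  simp only [scaledUpperToeplitz_apply, smul_eq_mul, Nat.sub_sub, add_comm 1]
  split_ifs <;> first | (exfalso; omega) | simp | ring

theorem eq_scaledUpperToeplitz_of_nilpotentJordanBlock_mul_eq {ζ : R}
    {B : Matrix (Fin k) (Fin k) R}
    (hB : nilpotentJordanBlock R k * B = ζ • (B * nilpotentJordanBlock R k)) :
    B = scaledUpperToeplitz ζ fun j => B ⟨0, j.pos⟩ j := by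
  have step (i : ℕ) (hi : i + 1 < k) (j : Fin k) : B ⟨i + 1, hi⟩ j =
      if h : 0 < (j : ℕ) then ζ * B ⟨i, by omega⟩ ⟨j - 1, by omega⟩ else 0 := by
    have := congrFun₂ hB ⟨i, by omega⟩ j
    rw [smul_apply, nilpotentJordanBlock_mul_apply, mul_nilpotentJordanBlock_apply, dif_pos hi,
      smul_eq_mul, mul_dite, mul_zero] at this
    exact this
  ext ⟨i, hi⟩ j
  induction i generalizing j with
  | zero => simp [scaledUpperToeplitz_apply]
  | succ i ih =>
    rw [step i hi, scaledUpperToeplitz_apply]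
    dsimp only
    split_ifs with hj hij hij
    · rw [ih, scaledUpperToeplitz_apply]
      simp only [if_pos (show i ≤ (j : ℕ) - 1 by omega), Nat.sub_sub, add_comm 1, pow_succ]
      ring
    · rw [ih, scaledUpperToeplitz_apply]
      simp only [if_neg (show ¬i ≤ (j : ℕ) - 1 by omega), mul_zero]
    · omega
    · rfl

end CommSemiring

theorem ker_mulLeft_sub_smul_mulRight_nilpotentJordanBlock {R : Type*} [CommRing R] (ζ : R) :
    LinearMap.ker (LinearMap.mulLeft R (nilpotentJordanBlock R k) -
      ζ • LinearMap.mulRight R (nilpotentJordanBlock R k)) =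
      LinearMap.range (scaledUpperToeplitzₗ ζ) := by
  ext B
  rw [LinearMap.mem_ker_mulLeft_sub_smul_mulRight_iff]
  constructor
  · exact fun hB => ⟨fun j => B ⟨0, j.pos⟩ j,
      (eq_scaledUpperToeplitz_of_nilpotentJordanBlock_mul_eq hB).symm⟩
  · rintro ⟨c, rfl⟩
    exact nilpotentJordanBlock_mul_scaledUpperToeplitz ζ c

end Matrix

open Matrix in
theorem jordan_block_zeta_centralizer_dim_general {F : Type*} [Field F] (k : ℕ) (ζ : F)
    (J : Matrix (Fin k) (Fin k) F)
    (hJ : ∀ i j : Fin k, J i j = if (j : ℕ) = (i : ℕ) + 1 then 1 else 0) :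
    Module.finrank F (LinearMap.ker
      (LinearMap.mulLeft F J - ζ • LinearMap.mulRight F J)) = k := by
  obtain rfl : J = nilpotentJordanBlock F k := ext hJ
  rw [ker_mulLeft_sub_smul_mulRight_nilpotentJordanBlock,
    LinearMap.finrank_range_of_inj (scaledUpperToeplitzₗ_injective ζ), Module.finrank_fin_fun]

/-- For `J` the nilpotent Jordan block of size `k` and `ζ ≠ 0`, the space of `k×k`
matrices `B` with `J·B = ζ·B·J` has dimension `k`. -/
theorem jordan_block_zeta_centralizer_dim {F : Type*} [Field F] (k : ℕ) (ζ : F) (hζ : ζ ≠ 0)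
    (J : Matrix (Fin k) (Fin k) F)
    (hJ : ∀ i j : Fin k, J i j = if (j : ℕ) = (i : ℕ) + 1 then 1 else 0) :
    Module.finrank F (LinearMap.ker
      (LinearMap.mulLeft F J - ζ • LinearMap.mulRight F J)) = k :=
  jordan_block_zeta_centralizer_dim_general k ζ J hJ
end

section
/- Let q be a prime power and ζ ∈ F_q^× . The count |K_{ζ,n}(F_q)| = #{(A,B) ∈ Mat_n(F_q)² : AB = ζBA} depends on ζ only through its multiplicative order m: if ζ, ζ' ∈ F_q^× have the same multiplicative order, then |K_{ζ,n}(F_q)| = |K_{ζ',n}(F_q)| for all n. -/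
/-!
If `AB = ζBA` with `ζ ≠ 0`, then `A` preserves the Fitting decomposition
`V = ker Bᴺ ⊕ im Bᴺ` (`N = dim V`) of `B`. So such pairs correspond to a splitting `V = U ⊕ W`
together with a pair on `U` whose `B` is nilpotent and a pair on `W` whose `B` is invertible,
and it suffices to match the two kinds of pairs for `ζ` and `ζ'` separately.

A nilpotent `B` is similar to `cB` for every `c ≠ 0`: its elementary divisors are powers of `X`,
which the substitution `X ↦ cX` fixes up to units. So for fixed nilpotent `B`, left
multiplication by some invertible `P` with `PBP⁻¹ = (ζ'/ζ)B` carries the `A` with `AB = ζBA`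
onto those with `AB = ζ'BA`.

For fixed `A`, the pairs `(β, z)` of an invertible `β` and a scalar `z` with `Aβ = zβA` form a
group. Hence the invertible `β` for `ζ` and for `ζ'` are cosets of one subgroup or empty, and
they are empty simultaneously as soon as `ζ` and `ζ'` generate the same subgroup of `Fˣ`. In the
cyclic group `F_qˣ` this is the case when they have the same order.
-/

open Polynomial Module

section QCommute

variable {F E E' : Type*} [CommRing F] [Ring E] [Algebra F E] [Ring E'] [Algebra F E']

def QCommute (q : F) (a b : E) : Prop := a * b = q • (b * a)

namespace QCommute

variable {q r : F} {a b x y : E}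

theorem mul_left (hx : QCommute q x b) (hy : QCommute r y b) : QCommute (q * r) (x * y) b := by
  rw [QCommute, mul_assoc, hy, mul_smul_comm, ← mul_assoc, hx, smul_mul_assoc, smul_smul,
    mul_assoc, mul_comm r]

theorem mul_right (hx : QCommute q a x) (hy : QCommute r a y) : QCommute (q * r) a (x * y) := by
  rw [QCommute, ← mul_assoc, hx, smul_mul_assoc, mul_assoc, hy, mul_smul_comm, smul_smul,
    ← mul_assoc]

theorem pow_right (h : QCommute q a b) (n : ℕ) : QCommute (q ^ n) a (b ^ n) := by
  induction n with
  | zero => simp [QCommute]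
  | succ n ih => rw [pow_succ, pow_succ]; exact ih.mul_right h

theorem units_inv_left {c : Fˣ} {P : Eˣ} (h : QCommute (c : F) (P : E) b) :
    QCommute ((c⁻¹ : Fˣ) : F) (↑P⁻¹ : E) b := by
  have key : b * ↑P⁻¹ = (c : F) • (↑P⁻¹ * b) :=
    calc b * ↑P⁻¹ = ↑P⁻¹ * (↑P * b) * ↑P⁻¹ := by simp [← mul_assoc]
      _ = (c : F) • (↑P⁻¹ * b) := by rw [h]; simp [mul_assoc]
  rw [QCommute, key, ← Units.smul_def, ← Units.smul_def, inv_smul_smul]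

theorem units_inv_right {c : Fˣ} {β : Eˣ} (h : QCommute (c : F) a (β : E)) :
    QCommute ((c⁻¹ : Fˣ) : F) a (↑β⁻¹ : E) := by
  have key : ↑β⁻¹ * a = (c : F) • (a * ↑β⁻¹) :=
    calc ↑β⁻¹ * a = ↑β⁻¹ * (a * ↑β) * ↑β⁻¹ := by simp [mul_assoc]
      _ = (c : F) • (a * ↑β⁻¹) := by rw [h]; simp
  rw [QCommute, key, ← Units.smul_def, ← Units.smul_def, inv_smul_smul]

theorem map_iff {φ : E →ₐ[F] E'} (hφ : Function.Injective φ) :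
    QCommute q (φ a) (φ b) ↔ QCommute q a b := by
  simp only [QCommute, ← map_mul, ← map_smul, hφ.eq_iff]

theorem prod_iff {a₁ b₁ : E} {a₂ b₂ : E'} :
    QCommute q (a₁, a₂) (b₁, b₂) ↔ QCommute q a₁ b₁ ∧ QCommute q a₂ b₂ :=
  Prod.ext_iff

def unitsMulLeftEquiv {c : Fˣ} {P : Eˣ} (hP : QCommute (c : F) (P : E) b) {z z' : F}
    (hz : (c : F) * z = z') : {a : E // QCommute z a b} ≃ {a : E // QCommute z' a b} :=
  Equiv.subtypeEquiv (Units.mulLeft P) fun a =>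
    ⟨fun ha => hz ▸ hP.mul_left ha, fun ha => by
      simpa [← hz, ← mul_assoc, Units.smul_def] using hP.units_inv_left.mul_left ha⟩

end QCommute

def qCommutingUnits (a : E) : Subgroup (Eˣ × Fˣ) where
  carrier := {p | QCommute (p.2 : F) a (p.1 : E)}
  mul_mem' hx hy := by simpa using QCommute.mul_right hx hy
  one_mem' := by simp [QCommute]
  inv_mem' h := QCommute.units_inv_right h

theorem nonempty_qCommute_units_equiv (a : E) {z z' : Fˣ}
    (h : Subgroup.zpowers z = Subgroup.zpowers z') :
    Nonempty ({β : Eˣ // QCommute (z : F) a β} ≃ {β : Eˣ // QCommute (z' : F) a β}) := by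
  set S := qCommutingUnits (F := F) a
  have transfer {w w' : Fˣ} (hw : w' ∈ Subgroup.zpowers w) {β : Eˣ}
      (hβ : QCommute (w : F) a β) : ∃ β' : Eˣ, QCommute (w' : F) a β' := by
    obtain ⟨k, rfl⟩ := Subgroup.mem_zpowers_iff.1 hw
    exact ⟨β ^ k, zpow_mem (show (β, w) ∈ S from hβ) k⟩
  rcases isEmpty_or_nonempty {β : Eˣ // QCommute (z : F) a β} with hempty | ⟨β₀, h₀⟩
  · have : IsEmpty {β : Eˣ // QCommute (z' : F) a β} :=
      ⟨fun ⟨_, hβ⟩ => hempty.false ⟨_, (transfer (h ▸ Subgroup.mem_zpowers z) hβ).choose_spec⟩⟩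
    exact ⟨Equiv.equivOfIsEmpty _ _⟩
  · obtain ⟨β₁, h₁⟩ := transfer (h ▸ Subgroup.mem_zpowers z') h₀
    have hγ : (β₀⁻¹ * β₁, z⁻¹ * z') ∈ S :=
      mul_mem (inv_mem (show (β₀, z) ∈ S from h₀)) (show (β₁, z') ∈ S from h₁)
    refine ⟨Equiv.subtypeEquiv (Equiv.mulRight (β₀⁻¹ * β₁)) fun β => ?_⟩
    change (β, z) ∈ S ↔ (β * (β₀⁻¹ * β₁), z') ∈ S
    rw [← S.mul_mem_cancel_right hγ, Prod.mk_mul_mk, mul_inv_cancel_left]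

variable (E) in
abbrev QCommutingPairs (q : F) : Type _ := {p : E × E // QCommute q p.1 p.2}

/- The two kinds of pairs of the Fitting decomposition, fibred over the coordinate that the
bijections between `q`-values keep fixed. -/

variable (E) in
abbrev NilQCommutingPairs (q : F) : Type _ :=
  Σ b : {b : E // IsNilpotent b}, {a : E // QCommute q a b}

variable (E) in
abbrev UnitQCommutingPairs (q : F) : Type _ := Σ a : E, {β : Eˣ // QCommute q a β}

def AlgEquiv.qCommutingPairsCongr (e : E ≃ₐ[F] E') (q : F) :
    QCommutingPairs E q ≃ QCommutingPairs E' q :=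
  Equiv.subtypeEquiv (e.toEquiv.prodCongr e.toEquiv) fun _ =>
    (QCommute.map_iff (φ := e.toAlgHom) e.injective).symm

end QCommute

theorem Ideal.quotientEquivAlg_smul {R A : Type*} [CommRing R] [CommRing A] [Algebra R A]
    {I J : Ideal A} (σ : A ≃ₐ[R] A) (h : J = I.map σ) (r : A) (x : A ⧸ I) :
    Ideal.quotientEquivAlg I J σ h (r • x) = σ r • Ideal.quotientEquivAlg I J σ h x := by
  simp only [Algebra.smul_def, Ideal.Quotient.algebraMap_eq, map_mul]
  rfl

theorem exists_linearEquiv_smul_eq_of_directSum {K R M ι : Type*} [CommRing K] [CommRing R]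
    [Algebra K R] [AddCommGroup M] [Module R M] [Module K M] [IsScalarTower K R M]
    [DecidableEq ι] {I : ι → Ideal R} (Φ : M ≃ₗ[R] DirectSum ι fun i => R ⧸ I i)
    (σ : R ≃ₐ[K] R) (hσ : ∀ i, (I i).map σ = I i) :
    ∃ g : M ≃ₗ[K] M, ∀ (r : R) (m : M), g (r • m) = σ r • g m := by
  let T i := (Ideal.quotientEquivAlg (I i) (I i) σ (hσ i).symm).toLinearEquiv
  let S := DFinsupp.mapRange.linearEquiv T
  have hS (r : R) (y : DirectSum ι fun i => R ⧸ I i) : S (r • y) = σ r • S y := by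
    ext i
    exact Ideal.quotientEquivAlg_smul σ (hσ i).symm r (y i)
  refine ⟨(Φ.restrictScalars K).trans (S.trans (Φ.symm.restrictScalars K)), fun r m => ?_⟩
  simp [hS]

theorem Polynomial.map_algEquivCMulXAddC_zero_of_X_pow_mem {K : Type*} [Field K] {a : K}
    [Invertible a] {I : Ideal K[X]} {N : ℕ} (hN : X ^ N ∈ I) :
    I.map (algEquivCMulXAddC a 0) = I := by
  obtain ⟨f, rfl⟩ := (IsPrincipalIdealRing.principal I).principal
  obtain ⟨j, -, hj⟩ := (dvd_prime_pow prime_X N).1 (Ideal.mem_span_singleton.1 hN)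
  change Ideal.map _ (Ideal.span {f}) = Ideal.span {f}
  have hunit : IsUnit (C a ^ j) := ((isUnit_of_invertible a).map C).pow j
  rw [Ideal.span_singleton_eq_span_singleton.2 hj, Ideal.map_span, Set.image_singleton]
  simp [mul_pow, Ideal.span_singleton_mul_left_unit hunit]

namespace Module.End

variable {K V : Type*} [Field K] [AddCommGroup V] [Module K V]

theorem exists_qCommute_units_of_isNilpotent [FiniteDimensional K V] {B : End K V}
    (hB : IsNilpotent B) (c : Kˣ) : ∃ P : (End K V)ˣ, QCommute (c : K) (P : End K V) B := by
  classical
  let _ := c.invertible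
  obtain ⟨N, hN⟩ := hB
  obtain ⟨ι, _, p, -, e, ⟨Φ⟩⟩ := Module.equiv_directSum_of_isTorsion
    (AEval.isTorsion_of_finiteDimensional K V B)
  have hXN : X ^ N ∈ Module.annihilator K[X] (AEval' B) := by
    refine Module.mem_annihilator.2 fun m => ?_
    rw [← (AEval'.of B).apply_symm_apply m, AEval'.X_pow_smul_of, hN]
    simp
  have hI (i : ι) : X ^ N ∈ K[X] ∙ p i ^ e i := by
    have := (Φ.symm.toLinearMap ∘ₗ DirectSum.lof K[X] ι _ i).annihilator_le_of_injective
      (Φ.symm.injective.comp (DirectSum.of_injective i)) hXN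
    rwa [Ideal.annihilator_quotient] at this
  obtain ⟨g, hg⟩ := exists_linearEquiv_smul_eq_of_directSum Φ (algEquivCMulXAddC (c : K) 0)
    fun i => map_algEquivCMulXAddC_zero_of_X_pow_mem (hI i)
  let P := (AEval'.of B).trans (g.trans (AEval'.of B).symm)
  refine ⟨LinearMap.GeneralLinearGroup.ofLinearEquiv P, LinearMap.ext fun v => ?_⟩
  have hgX := hg X (AEval'.of B v)
  simp only [algEquivCMulXAddC_apply, map_zero, add_zero, aeval_X, mul_apply,
    LinearMap.GeneralLinearGroup.coe_ofLinearEquiv, LinearEquiv.trans_apply, LinearMap.smul_apply,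
    P] at hgX ⊢
  rw [← AEval'.X_smul_of, hgX, mul_smul, AEval.C_smul, map_smul, AEval'.of_symm_X_smul]

end Module.End

namespace Module.End

variable {K V : Type*} [CommRing K] [AddCommGroup V] [Module K V] {U W : Submodule K V}

noncomputable def blockDiag (h : IsCompl U W) : End K U × End K W →ₐ[K] End K V :=
  ((Submodule.prodEquivOfIsCompl U W h).conjAlgEquiv K).toAlgHom.comp
    (LinearMap.prodMapAlgHom K U W)

theorem blockDiag_apply_left (h : IsCompl U W) (f : End K U × End K W) (u : U) :
    blockDiag h f u = f.1 u := by
  simp [blockDiag, LinearEquiv.conjAlgEquiv_apply]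

theorem blockDiag_apply_right (h : IsCompl U W) (f : End K U × End K W) (w : W) :
    blockDiag h f w = f.2 w := by
  simp [blockDiag, LinearEquiv.conjAlgEquiv_apply]

theorem blockDiag_injective (h : IsCompl U W) : Function.Injective (blockDiag h) := by
  intro f g hfg
  ext u
  · simpa [blockDiag_apply_left] using congr($hfg u)
  · simpa [blockDiag_apply_right] using congr($hfg u)

theorem blockDiag_restrict (h : IsCompl U W) (f : End K V) (hU : ∀ x ∈ U, f x ∈ U)
    (hW : ∀ x ∈ W, f x ∈ W) : blockDiag h (f.restrict hU, f.restrict hW) = f := by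
  ext v
  obtain ⟨u, w, rfl, -⟩ := Submodule.existsUnique_add_of_isCompl h v
  simp [blockDiag_apply_left, blockDiag_apply_right]

theorem ker_blockDiag_zero_left (h : IsCompl U W) {g : End K W} (hg : Function.Injective g) :
    LinearMap.ker (blockDiag h (0, g)) = U := by
  ext v
  obtain ⟨u, w, rfl, -⟩ := Submodule.existsUnique_add_of_isCompl h v
  rw [LinearMap.mem_ker, map_add, blockDiag_apply_left, blockDiag_apply_right,
    Submodule.add_mem_iff_right _ u.2]
  simp only [LinearMap.zero_apply, ZeroMemClass.coe_zero, zero_add, ZeroMemClass.coe_eq_zero,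
    hg.eq_iff' (map_zero g)]
  exact ⟨fun hw => hw ▸ zero_mem U, fun hw => by
    simpa using Submodule.disjoint_def.1 h.disjoint _ hw w.2⟩

theorem range_blockDiag_zero_left (h : IsCompl U W) {g : End K W} (hg : Function.Surjective g) :
    LinearMap.range (blockDiag h (0, g)) = W := by
  ext v
  constructor
  · rintro ⟨x, rfl⟩
    obtain ⟨u, w, rfl, -⟩ := Submodule.existsUnique_add_of_isCompl h x
    simp [blockDiag_apply_left, blockDiag_apply_right]
  · intro hv
    obtain ⟨w, hw⟩ := hg ⟨v, hv⟩
    exact ⟨w, by rw [blockDiag_apply_right, hw]⟩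

end Module.End

namespace QCommute

variable {K V : Type*} [CommRing K] [AddCommGroup V] [Module K V] {q : K} {A B : End K V}

theorem mapsTo_range_pow (h : QCommute q A B) (n : ℕ) :
    ∀ x ∈ LinearMap.range (B ^ n), A x ∈ LinearMap.range (B ^ n) := by
  rintro _ ⟨y, rfl⟩
  have hy := congr($(h.pow_right n) y)
  simp only [End.mul_apply, LinearMap.smul_apply] at hy
  exact hy ▸ ⟨q ^ n • A y, map_smul _ _ _⟩

theorem mapsTo_ker_pow [IsDomain K] [Module.IsTorsionFree K V] (hq : q ≠ 0)
    (h : QCommute q A B) (n : ℕ) :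
    ∀ x ∈ LinearMap.ker (B ^ n), A x ∈ LinearMap.ker (B ^ n) := by
  intro x hx
  have hx' := congr($(h.pow_right n) x)
  simp only [End.mul_apply, LinearMap.smul_apply, LinearMap.mem_ker.1 hx, map_zero] at hx'
  exact (smul_eq_zero.1 hx'.symm).resolve_left (pow_ne_zero n hq)

end QCommute

namespace Module.End

variable {K V : Type*} [Field K] [AddCommGroup V] [Module K V] [FiniteDimensional K V]
  {U W : Submodule K V}

theorem isCompl_ker_pow_finrank_range_pow_finrank (B : End K V) :
    IsCompl (LinearMap.ker (B ^ finrank K V)) (LinearMap.range (B ^ finrank K V)) := by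
  refine (Submodule.isCompl_iff_disjoint _ _ ?_).2 ?_
  · rw [add_comm]
    exact (B ^ finrank K V).finrank_range_add_finrank_ker.ge
  · rw [Submodule.disjoint_def]
    rintro _ hx ⟨y, rfl⟩
    have hy : y ∈ LinearMap.ker (B ^ (finrank K V + finrank K V)) := by
      rwa [pow_add, LinearMap.mem_ker, mul_apply]
    rwa [ker_pow_eq_ker_pow_finrank_of_le (by omega)] at hy

theorem pow_finrank_eq_zero_of_isNilpotent {f : End K V} (hf : IsNilpotent f) :
    f ^ finrank K V = 0 := by
  simpa only [hf.charpoly_eq_X_pow_finrank, map_pow, aeval_X] using f.aeval_self_charpoly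

theorem ker_range_pow_finrank_blockDiag (h : IsCompl U W) {B₀ : End K U} (hB₀ : IsNilpotent B₀)
    (β : (End K W)ˣ) :
    LinearMap.ker (blockDiag h (B₀, β) ^ finrank K V) = U ∧
      LinearMap.range (blockDiag h (B₀, β) ^ finrank K V) = W := by
  have hβ := (isUnit_iff _).1 (β ^ finrank K V).isUnit
  rw [← map_pow, Prod.pow_mk, pow_eq_zero_of_le (Submodule.finrank_le U)
    (pow_finrank_eq_zero_of_isNilpotent hB₀), ← Units.val_pow_eq_pow_val]
  exact ⟨ker_blockDiag_zero_left h hβ.1, range_blockDiag_zero_left h hβ.2⟩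

variable (K V) in
abbrev ComplPair : Type _ := {p : Submodule K V × Submodule K V // IsCompl p.1 p.2}

noncomputable def fittingGlue (q : K) :
    (Σ d : ComplPair K V,
      NilQCommutingPairs (End K d.1.1) q × UnitQCommutingPairs (End K d.1.2) q) →
      QCommutingPairs (End K V) q
  | ⟨⟨_, h⟩, ⟨⟨B₀, _⟩, ⟨A₀, h₀⟩⟩, ⟨A₁, ⟨β, h₁⟩⟩⟩ =>
    ⟨(blockDiag h (A₀, A₁), blockDiag h (B₀, β)),
      (QCommute.map_iff (blockDiag_injective h)).2 (QCommute.prod_iff.2 ⟨h₀, h₁⟩)⟩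

theorem fittingGlue_injective (q : K) : Function.Injective (fittingGlue (V := V) q) := by
  rintro ⟨⟨⟨U, W⟩, h⟩, ⟨⟨B₀, hB₀⟩, ⟨A₀, h₀⟩⟩, ⟨A₁, ⟨β, h₁⟩⟩⟩
    ⟨⟨⟨U', W'⟩, h'⟩, ⟨⟨B₀', hB₀'⟩, ⟨A₀', h₀'⟩⟩, ⟨A₁', ⟨β', h₁'⟩⟩⟩ hglue
  simp only [fittingGlue, Subtype.mk.injEq, Prod.mk.injEq] at hglue
  obtain ⟨hA, hB⟩ := hglue
  obtain ⟨hU, hW⟩ := ker_range_pow_finrank_blockDiag h hB₀ β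
  obtain ⟨hU', hW'⟩ := ker_range_pow_finrank_blockDiag h' hB₀' β'
  rw [hB] at hU hW
  obtain rfl : U = U' := hU.symm.trans hU'
  obtain rfl : W = W' := hW.symm.trans hW'
  obtain ⟨rfl, rfl⟩ := Prod.ext_iff.1 (blockDiag_injective h hA)
  obtain ⟨rfl, hβ⟩ := Prod.ext_iff.1 (blockDiag_injective h hB)
  obtain rfl := Units.ext hβ
  rfl

theorem fittingGlue_surjective {q : K} (hq : q ≠ 0) :
    Function.Surjective (fittingGlue (V := V) q) := by
  rintro ⟨⟨A, B⟩, hAB⟩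
  set N := finrank K V
  have hc := isCompl_ker_pow_finrank_range_pow_finrank B
  have hAU := hAB.mapsTo_ker_pow hq N
  have hAW := hAB.mapsTo_range_pow N
  have hBB : QCommute (1 : K) B B := (one_smul K _).symm
  have hBU := hBB.mapsTo_ker_pow one_ne_zero N
  have hBW := hBB.mapsTo_range_pow N
  have hnil : IsNilpotent (B.restrict hBU) := ⟨N, by
    ext x
    rw [pow_restrict, LinearMap.coe_restrict_apply]
    exact LinearMap.mem_ker.1 x.2⟩
  have hunit : IsUnit (B.restrict hBW) := by
    refine (LinearMap.isUnit_iff_ker_eq_bot _).2 (Submodule.eq_bot_iff _ |>.2 fun w hw => ?_)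
    have hwU : (w : V) ∈ LinearMap.ker (B ^ N) := ker_pow_le_ker_pow_finrank B 1 <| by
      simpa [Subtype.ext_iff] using hw
    exact Subtype.ext (Submodule.disjoint_def.1 hc.disjoint _ hwU w.2)
  have hA : blockDiag hc (A.restrict hAU, A.restrict hAW) = A := blockDiag_restrict hc A hAU hAW
  have hB : blockDiag hc (B.restrict hBU, (hunit.unit : End K _)) = B := by
    rw [hunit.unit_spec]
    exact blockDiag_restrict hc B hBU hBW
  have hglued : QCommute q (blockDiag hc (A.restrict hAU, A.restrict hAW))
      (blockDiag hc (B.restrict hBU, (hunit.unit : End K _))) := by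
    rw [hA, hB]
    exact hAB
  obtain ⟨h₀, h₁⟩ := QCommute.prod_iff.1 ((QCommute.map_iff (blockDiag_injective hc)).1 hglued)
  exact ⟨⟨⟨(LinearMap.ker (B ^ N), LinearMap.range (B ^ N)), hc⟩,
    ⟨⟨B.restrict hBU, hnil⟩, ⟨A.restrict hAU, h₀⟩⟩, ⟨A.restrict hAW, ⟨hunit.unit, h₁⟩⟩⟩,
    Subtype.ext (Prod.ext hA hB)⟩

noncomputable def fittingEquiv {q : K} (hq : q ≠ 0) :
    (Σ d : ComplPair K V,
      NilQCommutingPairs (End K d.1.1) q × UnitQCommutingPairs (End K d.1.2) q) ≃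
      QCommutingPairs (End K V) q :=
  Equiv.ofBijective _ ⟨fittingGlue_injective q, fittingGlue_surjective hq⟩

theorem nonempty_qCommutingPairs_equiv {z z' : Kˣ}
    (h : Subgroup.zpowers z = Subgroup.zpowers z') :
    Nonempty (QCommutingPairs (End K V) (z : K) ≃ QCommutingPairs (End K V) (z' : K)) := by
  have nil (U : Submodule K V) :
      Nonempty (NilQCommutingPairs (End K U) (z : K) ≃ NilQCommutingPairs (End K U) (z' : K)) :=
    ⟨Equiv.sigmaCongrRight fun b => QCommute.unitsMulLeftEquiv
      (exists_qCommute_units_of_isNilpotent b.2 (z' * z⁻¹)).choose_spec (by simp)⟩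
  have unit (W : Submodule K V) :
      Nonempty (UnitQCommutingPairs (End K W) (z : K) ≃ UnitQCommutingPairs (End K W) (z' : K)) :=
    ⟨Equiv.sigmaCongrRight fun a => (nonempty_qCommute_units_equiv a h).some⟩
  exact ⟨(fittingEquiv z.ne_zero).symm.trans <|
    (Equiv.sigmaCongrRight fun d : ComplPair K V =>
      (nil d.1.1).some.prodCongr (unit d.1.2).some).trans (fittingEquiv z'.ne_zero)⟩

end Module.End

theorem zpowers_eq_zpowers_of_orderOf_eq {G : Type*} [CommGroup G] [IsCyclic G] [Finite G]
    {a b : G} (h : orderOf a = orderOf b) : Subgroup.zpowers a = Subgroup.zpowers b := by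
  suffices key : ∀ x : G, Subgroup.zpowers x = (powMonoidHom (orderOf x) : G →* G).ker by
    rw [key a, key b, h]
  intro x
  refine Subgroup.eq_of_le_of_card_ge ?_ ?_
  · rw [Subgroup.zpowers_le]
    exact pow_orderOf_eq_one x
  · rw [IsCyclic.card_powMonoidHom_ker, Nat.card_zpowers,
      Nat.gcd_eq_right (orderOf_dvd_natCard x)]

/-- `|K_{ζ,n}(F_q)|` depends on `ζ` only through its multiplicative order: if
`ζ, ζ' ∈ F_q^×` have the same multiplicative order, then the counts of pairs `(A,B)` with
`AB = ζBA` and with `AB = ζ'BA` agree for all `n`. -/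
theorem card_zeta_commuting_depends_only_on_order {F : Type*} [Field F] [Fintype F]
    (ζ ζ' : Fˣ) (h : orderOf ζ = orderOf ζ') (n : ℕ) :
    Nat.card {p : Matrix (Fin n) (Fin n) F × Matrix (Fin n) (Fin n) F //
        p.1 * p.2 = (ζ : F) • (p.2 * p.1)} =
      Nat.card {p : Matrix (Fin n) (Fin n) F × Matrix (Fin n) (Fin n) F //
        p.1 * p.2 = (ζ' : F) • (p.2 * p.1)} := by
  obtain ⟨f⟩ := Module.End.nonempty_qCommutingPairs_equiv (V := Fin n → F)
    (zpowers_eq_zpowers_of_orderOf_eq h)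
  let e := Matrix.toLinAlgEquiv' (R := F) (n := Fin n)
  exact Nat.card_congr <|
    (e.qCommutingPairsCongr ζ).trans (f.trans (e.qCommutingPairsCongr ζ').symm)
end
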